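/- Let nonnegative power levels P^{CS} and P^c_i, P^d_i, P^u_i (i = 1,…,n) be given. Then the stationary expected power under ν_m equals the central-server throughput times the average energy per round: P^{CS} · Pr_{ν_m}(x^{CS} > 0) + Σ_{i=1}^n ( P^c_i · Pr_{ν_m}(x^c_i > 0) + P^d_i · E_{ν_m}[x^d_i] + P^u_i · E_{ν_m}[x^u_i] ) = (W(m−1)/W(m)) · ( P^{CS}/μ^{CS} + Σ_{i=1}^n p_i ℰ_i ), where ℰ_i = P^c_i/μ^c_i + P^u_i/μ^u_i + P^d_i/μ^d_i, Pr_{ν_m}(A) = Σ_{x ∈ Y(m), x ∈ A} ν_m(x), and E_{ν_m}[f] = Σ_{x ∈ Y(m)} f(x) ν_m(x). -/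
import Mathlib


open scoped BigOperators

/-- An aggregated state of the network with a central-server queue: `cs` is the total
number of tasks at the central server, and `d`, `c`, `u` count the tasks at each
client's downlink, computation, and uplink servers. -/
structure StA (n : ℕ) where
  cs : ℕ
  d : Fin n → ℕ
  c : Fin n → ℕ
  u : Fin n → ℕ

namespace StA

variable {n : ℕ}

/-- Total number of tasks in an aggregated state. -/
def totalA (x : StA n) : ℕ := x.cs + ∑ i, (x.d i + x.c i + x.u i)

/-- Product-form weight of an aggregated state. -/
noncomputable def v (p μc μd μu : Fin n → ℝ) (μCS : ℝ) (x : StA n) : ℝ :=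
  (1 / μCS) ^ x.cs *
    ∏ i,
      (p i / μc i) ^ x.c i *
        ((p i / μd i) ^ x.d i / (Nat.factorial (x.d i) : ℝ)) *
        ((p i / μu i) ^ x.u i / (Nat.factorial (x.u i) : ℝ))

/-- Normalizing constant `W(k)` (it vanishes for `k < 0`). -/
noncomputable def W (p μc μd μu : Fin n → ℝ) (μCS : ℝ) (k : ℤ) : ℝ :=
  ∑' x : StA n, if (totalA x : ℤ) = k then v p μc μd μu μCS x else 0

/-- Aggregated product-form distribution `ν_k`. -/
noncomputable def nu (p μc μd μu : Fin n → ℝ) (μCS : ℝ) (k : ℤ) (x : StA n) : ℝ :=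
  v p μc μd μu μCS x / W p μc μd μu μCS k

end StA

open StA

/-- Expectation of `f` under the aggregated distribution `ν_k`. -/
noncomputable def Enu {n : ℕ} (p μc μd μu : Fin n → ℝ) (μCS : ℝ) (k : ℤ)
    (f : StA n → ℝ) : ℝ :=
  ∑' x : StA n, if (totalA x : ℤ) = k then f x * nu p μc μd μu μCS k x else 0

section Aux

variable {n : ℕ}

theorem StA.ext' {x y : StA n} (h1 : x.cs = y.cs) (h2 : x.d = y.d)
    (h3 : x.c = y.c) (h4 : x.u = y.u) : x = y := by
  cases x; cases y; simp_all

lemma finite_total (n k : ℕ) : {x : StA n | totalA x = k}.Finite := by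
  rw [← Set.finite_coe_iff]
  have hb : ∀ (x : StA n), totalA x = k →
      x.cs < k + 1 ∧ ∀ i, x.d i < k + 1 ∧ x.c i < k + 1 ∧ x.u i < k + 1 := by
    intro x hx
    have hs : ∀ i : Fin n, x.d i + x.c i + x.u i ≤ ∑ j, (x.d j + x.c j + x.u j) :=
      fun i => Finset.single_le_sum (f := fun j => x.d j + x.c j + x.u j)
        (fun j _ => Nat.zero_le _) (Finset.mem_univ i)
    unfold totalA at hx
    refine ⟨by omega, fun i => ?_⟩
    have := hs i; omega
  let F : {x : StA n // totalA x = k} →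
      Fin (k+1) × (Fin n → Fin (k+1) × Fin (k+1) × Fin (k+1)) :=
    fun x => (⟨x.1.cs, (hb x.1 x.2).1⟩,
      fun i => (⟨x.1.d i, ((hb x.1 x.2).2 i).1⟩, ⟨x.1.c i, ((hb x.1 x.2).2 i).2.1⟩,
        ⟨x.1.u i, ((hb x.1 x.2).2 i).2.2⟩))
  have hF : Function.Injective F := by
    intro a b hab
    simp only [F, Prod.mk.injEq, funext_iff, Fin.mk.injEq] at hab
    exact Subtype.ext (StA.ext' hab.1 (funext fun i => (hab.2 i).1)
      (funext fun i => (hab.2 i).2.1) (funext fun i => (hab.2 i).2.2))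
  exact Finite.of_injective F hF

/-! Increment/decrement maps. -/

def incCS (x : StA n) : StA n := ⟨x.cs + 1, x.d, x.c, x.u⟩
def decCS (x : StA n) : StA n := ⟨x.cs - 1, x.d, x.c, x.u⟩
def incC (i : Fin n) (x : StA n) : StA n :=
  ⟨x.cs, x.d, Function.update x.c i (x.c i + 1), x.u⟩
def decC (i : Fin n) (x : StA n) : StA n :=
  ⟨x.cs, x.d, Function.update x.c i (x.c i - 1), x.u⟩
def incD (i : Fin n) (x : StA n) : StA n :=
  ⟨x.cs, Function.update x.d i (x.d i + 1), x.c, x.u⟩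
def decD (i : Fin n) (x : StA n) : StA n :=
  ⟨x.cs, Function.update x.d i (x.d i - 1), x.c, x.u⟩
def incU (i : Fin n) (x : StA n) : StA n :=
  ⟨x.cs, x.d, x.c, Function.update x.u i (x.u i + 1)⟩
def decU (i : Fin n) (x : StA n) : StA n :=
  ⟨x.cs, x.d, x.c, Function.update x.u i (x.u i - 1)⟩

lemma sum_update' (f : Fin n → ℕ) (i : Fin n) (a : ℕ) :
    ∑ j, Function.update f i a j = a + ∑ j ∈ Finset.univ.erase i, f j := by
  rw [Finset.sum_update_of_mem (Finset.mem_univ i), Finset.sdiff_singleton_eq_erase]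

lemma sum_erase' (f : Fin n → ℕ) (i : Fin n) :
    f i + ∑ j ∈ Finset.univ.erase i, f j = ∑ j, f j :=
  Finset.add_sum_erase _ f (Finset.mem_univ i)

lemma sum3 (a b c : Fin n → ℕ) :
    ∑ j, (a j + b j + c j) = (∑ j, a j) + (∑ j, b j) + (∑ j, c j) := by
  rw [Finset.sum_add_distrib, Finset.sum_add_distrib]

lemma totalA_incCS (x : StA n) : totalA (incCS x) = totalA x + 1 := by
  simp only [totalA, incCS]; omega

lemma totalA_incC (i : Fin n) (x : StA n) : totalA (incC i x) = totalA x + 1 := by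
  simp only [totalA, incC, sum3, sum_update' x.c i (x.c i + 1)]
  have := sum_erase' x.c i; omega

lemma totalA_incD (i : Fin n) (x : StA n) : totalA (incD i x) = totalA x + 1 := by
  simp only [totalA, incD, sum3, sum_update' x.d i (x.d i + 1)]
  have := sum_erase' x.d i; omega

lemma totalA_incU (i : Fin n) (x : StA n) : totalA (incU i x) = totalA x + 1 := by
  simp only [totalA, incU, sum3, sum_update' x.u i (x.u i + 1)]
  have := sum_erase' x.u i; omega

lemma totalA_decCS (x : StA n) (h : 1 ≤ x.cs) : totalA (decCS x) + 1 = totalA x := by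
  simp only [totalA, decCS]; omega

lemma totalA_decC (i : Fin n) (x : StA n) (h : 1 ≤ x.c i) :
    totalA (decC i x) + 1 = totalA x := by
  simp only [totalA, decC, sum3, sum_update' x.c i (x.c i - 1)]
  have := sum_erase' x.c i; omega

lemma totalA_decD (i : Fin n) (x : StA n) (h : 1 ≤ x.d i) :
    totalA (decD i x) + 1 = totalA x := by
  simp only [totalA, decD, sum3, sum_update' x.d i (x.d i - 1)]
  have := sum_erase' x.d i; omega

lemma totalA_decU (i : Fin n) (x : StA n) (h : 1 ≤ x.u i) :
    totalA (decU i x) + 1 = totalA x := by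
  simp only [totalA, decU, sum3, sum_update' x.u i (x.u i - 1)]
  have := sum_erase' x.u i; omega

lemma update_inc_dec (f : Fin n → ℕ) (i : Fin n) (h : 1 ≤ f i) :
    Function.update (Function.update f i (f i - 1)) i
      (Function.update f i (f i - 1) i + 1) = f := by
  funext j
  rcases eq_or_ne j i with rfl | hne
  · simp only [Function.update_self]; omega
  · simp [Function.update_of_ne hne]

lemma update_dec_inc (f : Fin n → ℕ) (i : Fin n) :
    Function.update (Function.update f i (f i + 1)) i
      (Function.update f i (f i + 1) i - 1) = f := by
  funext j
  rcases eq_or_ne j i with rfl | hne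
  · simp only [Function.update_self]; omega
  · simp [Function.update_of_ne hne]

/-! Weight relations. -/

noncomputable def trm (p μc μd μu : Fin n → ℝ) (x : StA n) (j : Fin n) : ℝ :=
  (p j / μc j) ^ x.c j * ((p j / μd j) ^ x.d j / (Nat.factorial (x.d j) : ℝ)) *
    ((p j / μu j) ^ x.u j / (Nat.factorial (x.u j) : ℝ))

lemma v_eq (p μc μd μu : Fin n → ℝ) (μCS : ℝ) (x : StA n) :
    v p μc μd μu μCS x = (1 / μCS) ^ x.cs * ∏ j, trm p μc μd μu x j := rfl

lemma prod_split (T : Fin n → ℝ) (i : Fin n) (b : ℝ) :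
    ∏ j, Function.update T i b j = b * ∏ j ∈ Finset.univ.erase i, T j := by
  rw [Finset.prod_update_of_mem (Finset.mem_univ i), Finset.sdiff_singleton_eq_erase]

lemma v_incCS (p μc μd μu : Fin n → ℝ) (μCS : ℝ) (x : StA n) :
    v p μc μd μu μCS (incCS x) = (1 / μCS) * v p μc μd μu μCS x := by
  simp only [v, incCS, pow_succ]
  ring

lemma trm_incC (p μc μd μu : Fin n → ℝ) (i : Fin n) (x : StA n) :
    trm p μc μd μu (incC i x) =
      Function.update (trm p μc μd μu x) i ((p i / μc i) * trm p μc μd μu x i) := by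
  funext j
  rcases eq_or_ne j i with rfl | h
  · simp only [trm, incC, Function.update_self, pow_succ]; ring
  · simp [trm, incC, Function.update_of_ne h]

lemma v_incC (p μc μd μu : Fin n → ℝ) (μCS : ℝ) (i : Fin n) (x : StA n) :
    v p μc μd μu μCS (incC i x) = (p i / μc i) * v p μc μd μu μCS x := by
  rw [v_eq, v_eq, trm_incC, prod_split,
    ← Finset.mul_prod_erase Finset.univ (trm p μc μd μu x) (Finset.mem_univ i)]
  show (1 / μCS) ^ x.cs * _ = _
  ring

lemma pow_factorial_step (q : ℝ) (d : ℕ) :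
    q ^ (d + 1) / (Nat.factorial (d + 1) : ℝ)
      = (q / ((d : ℝ) + 1)) * (q ^ d / (Nat.factorial d : ℝ)) := by
  have h1 : ((Nat.factorial d) : ℝ) ≠ 0 := Nat.cast_ne_zero.mpr (Nat.factorial_ne_zero _)
  have h2 : ((d : ℝ) + 1) ≠ 0 := by positivity
  rw [Nat.factorial_succ, pow_succ]
  push_cast
  field_simp

lemma trm_incD (p μc μd μu : Fin n → ℝ) (i : Fin n) (x : StA n) :
    trm p μc μd μu (incD i x) =
      Function.update (trm p μc μd μu x) i
        ((p i / μd i) / ((x.d i : ℝ) + 1) * trm p μc μd μu x i) := by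
  funext j
  rcases eq_or_ne j i with rfl | h
  · simp only [trm, incD, Function.update_self]
    rw [pow_factorial_step]
    ring
  · simp [trm, incD, Function.update_of_ne h]

lemma v_incD (p μc μd μu : Fin n → ℝ) (μCS : ℝ) (i : Fin n) (x : StA n) :
    ((x.d i : ℝ) + 1) * v p μc μd μu μCS (incD i x) = (p i / μd i) * v p μc μd μu μCS x := by
  have h2 : ((x.d i : ℝ) + 1) ≠ 0 := by positivity
  rw [v_eq, v_eq, trm_incD, prod_split,
    ← Finset.mul_prod_erase Finset.univ (trm p μc μd μu x) (Finset.mem_univ i)]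
  have key : (p i / μd i) / ((x.d i : ℝ) + 1) * ((x.d i : ℝ) + 1) = p i / μd i :=
    div_mul_cancel₀ _ h2
  show ((x.d i : ℝ) + 1) * ((1 / μCS) ^ x.cs * _) = _
  linear_combination ((1 / μCS) ^ x.cs * trm p μc μd μu x i *
    ∏ j ∈ Finset.univ.erase i, trm p μc μd μu x j) * key

lemma trm_incU (p μc μd μu : Fin n → ℝ) (i : Fin n) (x : StA n) :
    trm p μc μd μu (incU i x) =
      Function.update (trm p μc μd μu x) i
        ((p i / μu i) / ((x.u i : ℝ) + 1) * trm p μc μd μu x i) := by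
  funext j
  rcases eq_or_ne j i with rfl | h
  · simp only [trm, incU, Function.update_self]
    rw [pow_factorial_step]
    ring
  · simp [trm, incU, Function.update_of_ne h]

lemma v_incU (p μc μd μu : Fin n → ℝ) (μCS : ℝ) (i : Fin n) (x : StA n) :
    ((x.u i : ℝ) + 1) * v p μc μd μu μCS (incU i x) = (p i / μu i) * v p μc μd μu μCS x := by
  have h2 : ((x.u i : ℝ) + 1) ≠ 0 := by positivity
  rw [v_eq, v_eq, trm_incU, prod_split,
    ← Finset.mul_prod_erase Finset.univ (trm p μc μd μu x) (Finset.mem_univ i)]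
  have key : (p i / μu i) / ((x.u i : ℝ) + 1) * ((x.u i : ℝ) + 1) = p i / μu i :=
    div_mul_cancel₀ _ h2
  show ((x.u i : ℝ) + 1) * ((1 / μCS) ^ x.cs * _) = _
  linear_combination ((1 / μCS) ^ x.cs * trm p μc μd μu x i *
    ∏ j ∈ Finset.univ.erase i, trm p μc μd μu x j) * key

/-! Sum transfer along decrement bijections. -/

lemma sum_transfer {m : ℕ} (hm : 1 ≤ m) (g : StA n → ℝ)
    (q : StA n → Prop) [DecidablePred q] (inc dec : StA n → StA n)
    (htot : ∀ x, totalA (inc x) = totalA x + 1)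
    (hq : ∀ x, q (inc x))
    (hdectot : ∀ x, q x → totalA (dec x) + 1 = totalA x)
    (hincdec : ∀ x, q x → inc (dec x) = x)
    (hdecinc : ∀ x, dec (inc x) = x) :
    ∑ x ∈ (finite_total n m).toFinset.filter q, g x
      = ∑ y ∈ (finite_total n (m-1)).toFinset, g (inc y) := by
  apply Finset.sum_nbij' (i := dec) (j := inc)
  · intro a ha
    simp only [Finset.mem_filter, Set.Finite.mem_toFinset, Set.mem_setOf_eq] at ha ⊢
    have := hdectot a ha.2; omega
  · intro b hb
    simp only [Set.Finite.mem_toFinset, Set.mem_setOf_eq] at hb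
    simp only [Finset.mem_filter, Set.Finite.mem_toFinset, Set.mem_setOf_eq]
    exact ⟨by rw [htot, hb]; omega, hq b⟩
  · intro a ha
    exact hincdec a (Finset.mem_filter.mp ha).2
  · intro b _
    exact hdecinc b
  · intro a ha
    conv_lhs => rw [← hincdec a (Finset.mem_filter.mp ha).2]

end Aux


/-- With a central-server queue, the stationary expected power equals the central-server
throughput times the average energy per round:
`P^CS Pr(x^CS > 0) + Σ_i (P^c_i Pr(x^c_i > 0) + P^d_i E[x^d_i] + P^u_i E[x^u_i])
 = (W(m-1)/W(m)) (P^CS/μ^CS + Σ_i p_i ℰ_i)`. -/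
theorem stmt19 (n m : ℕ) (hn : 1 ≤ n) (hm : 1 ≤ m)
    (p μc μd μu : Fin n → ℝ) (μCS : ℝ)
    (hp : ∀ i, 0 < p i) (hpsum : ∑ i, p i = 1)
    (hμc : ∀ i, 0 < μc i) (hμd : ∀ i, 0 < μd i) (hμu : ∀ i, 0 < μu i) (hμCS : 0 < μCS)
    (PCS : ℝ) (Pc Pd Pu : Fin n → ℝ)
    (hPCS : 0 ≤ PCS) (hPc : ∀ i, 0 ≤ Pc i) (hPd : ∀ i, 0 ≤ Pd i) (hPu : ∀ i, 0 ≤ Pu i) :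
    PCS * (∑' x : StA n,
        if totalA x = m ∧ 1 ≤ x.cs then nu p μc μd μu μCS (m : ℤ) x else 0) +
      (∑ i,
        (Pc i * (∑' x : StA n,
            if totalA x = m ∧ 1 ≤ x.c i then nu p μc μd μu μCS (m : ℤ) x else 0) +
          Pd i * Enu p μc μd μu μCS (m : ℤ) (fun x => (x.d i : ℝ)) +
          Pu i * Enu p μc μd μu μCS (m : ℤ) (fun x => (x.u i : ℝ)))) =
      (W p μc μd μu μCS ((m : ℤ) - 1) / W p μc μd μu μCS (m : ℤ)) *
        (PCS / μCS + ∑ i, p i * (Pc i / μc i + Pu i / μu i + Pd i / μd i)) := by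
  classical
  set V : StA n → ℝ := v p μc μd μu μCS with hVdef
  set A : Finset (StA n) := (finite_total n m).toFinset with hAdef
  set B : Finset (StA n) := (finite_total n (m-1)).toFinset with hBdef
  have hmemA : ∀ x : StA n, x ∈ A ↔ totalA x = m := fun x => Set.Finite.mem_toFinset _
  have hmemB : ∀ x : StA n, x ∈ B ↔ totalA x = m - 1 := fun x => Set.Finite.mem_toFinset _
  obtain ⟨SA, hSAdef⟩ : ∃ r : ℝ, ∑ x ∈ A, V x = r := ⟨_, rfl⟩
  obtain ⟨SB, hSBdef⟩ : ∃ r : ℝ, ∑ x ∈ B, V x = r := ⟨_, rfl⟩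
  -- W values
  have hWm : W p μc μd μu μCS (m : ℤ) = SA := by
    rw [W, tsum_eq_sum (s := A)
      (fun x hx => if_neg (fun h => hx ((hmemA x).mpr (by exact_mod_cast h)))), ← hSAdef]
    exact Finset.sum_congr rfl fun x hx => if_pos (by exact_mod_cast (hmemA x).mp hx)
  have hWm1 : W p μc μd μu μCS ((m : ℤ) - 1) = SB := by
    rw [W, tsum_eq_sum (s := B)
      (fun x hx => if_neg (fun h => hx ((hmemB x).mpr (by omega)))), ← hSBdef]
    refine Finset.sum_congr rfl fun x hx => if_pos ?_
    have := (hmemB x).mp hx; omega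
  have hnu : ∀ x : StA n, nu p μc μd μu μCS (m : ℤ) x = V x / SA := fun x => by
    rw [nu, hWm]
  -- transferred sums
  have hCS : ∑ x ∈ A.filter (fun x => 1 ≤ x.cs), V x = (1 / μCS) * SB := by
    rw [hAdef, sum_transfer hm V _ incCS decCS totalA_incCS
      (fun x => Nat.le_add_left 1 x.cs) (fun x h => totalA_decCS x h)
      (fun x h => StA.ext' (by simp only [incCS, decCS]; omega) rfl rfl rfl)
      (fun x => StA.ext' (by simp only [incCS, decCS]; omega) rfl rfl rfl)]
    rw [← hSBdef, Finset.mul_sum]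
    exact Finset.sum_congr rfl fun y _ => v_incCS p μc μd μu μCS y
  have hC : ∀ i, ∑ x ∈ A.filter (fun x => 1 ≤ x.c i), V x = (p i / μc i) * SB := by
    intro i
    rw [hAdef, sum_transfer hm V _ (incC i) (decC i) (totalA_incC i)
      (fun x => by simp [incC])
      (fun x h => totalA_decC i x h)
      (fun x h => StA.ext' rfl rfl (update_inc_dec x.c i h) rfl)
      (fun x => StA.ext' rfl rfl (update_dec_inc x.c i) rfl)]
    rw [← hSBdef, Finset.mul_sum]
    exact Finset.sum_congr rfl fun y _ => v_incC p μc μd μu μCS i y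
  have hD : ∀ i, ∑ x ∈ A, (x.d i : ℝ) * V x = (p i / μd i) * SB := by
    intro i
    rw [← Finset.sum_filter_of_ne (p := fun x => 1 ≤ x.d i)
      (fun x _ hne => by
        by_contra hp
        simp only [not_le, Nat.lt_one_iff] at hp
        exact hne (by rw [hp]; simp))]
    rw [hAdef, sum_transfer hm (fun x => (x.d i : ℝ) * V x) _ (incD i) (decD i)
      (totalA_incD i)
      (fun x => by simp [incD])
      (fun x h => totalA_decD i x h)
      (fun x h => StA.ext' rfl (update_inc_dec x.d i h) rfl rfl)
      (fun x => StA.ext' rfl (update_dec_inc x.d i) rfl rfl)]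
    rw [← hSBdef, Finset.mul_sum]
    refine Finset.sum_congr rfl fun y _ => ?_
    have h1 : ((incD i y).d i : ℝ) = (y.d i : ℝ) + 1 := by
      simp [incD]
    rw [h1]
    exact v_incD p μc μd μu μCS i y
  have hU : ∀ i, ∑ x ∈ A, (x.u i : ℝ) * V x = (p i / μu i) * SB := by
    intro i
    rw [← Finset.sum_filter_of_ne (p := fun x => 1 ≤ x.u i)
      (fun x _ hne => by
        by_contra hp
        simp only [not_le, Nat.lt_one_iff] at hp
        exact hne (by rw [hp]; simp))]
    rw [hAdef, sum_transfer hm (fun x => (x.u i : ℝ) * V x) _ (incU i) (decU i)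
      (totalA_incU i)
      (fun x => by simp [incU])
      (fun x h => totalA_decU i x h)
      (fun x h => StA.ext' rfl rfl rfl (update_inc_dec x.u i h))
      (fun x => StA.ext' rfl rfl rfl (update_dec_inc x.u i))]
    rw [← hSBdef, Finset.mul_sum]
    refine Finset.sum_congr rfl fun y _ => ?_
    have h1 : ((incU i y).u i : ℝ) = (y.u i : ℝ) + 1 := by
      simp [incU]
    rw [h1]
    exact v_incU p μc μd μu μCS i y
  -- tsum reductions
  have hTCS : (∑' x : StA n,
      if totalA x = m ∧ 1 ≤ x.cs then nu p μc μd μu μCS (m : ℤ) x else 0)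
        = (1 / μCS) * SB / SA := by
    rw [tsum_eq_sum (s := A) (fun x hx => if_neg (fun h => hx ((hmemA x).mpr h.1)))]
    rw [← hCS, Finset.sum_filter, Finset.sum_div]
    refine Finset.sum_congr rfl fun x hx => ?_
    by_cases h1 : 1 ≤ x.cs
    · rw [if_pos ⟨(hmemA x).mp hx, h1⟩, if_pos h1, hnu]
    · rw [if_neg (fun hc => h1 hc.2), if_neg h1, zero_div]
  have hTC : ∀ i, (∑' x : StA n,
      if totalA x = m ∧ 1 ≤ x.c i then nu p μc μd μu μCS (m : ℤ) x else 0)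
        = (p i / μc i) * SB / SA := by
    intro i
    rw [tsum_eq_sum (s := A) (fun x hx => if_neg (fun h => hx ((hmemA x).mpr h.1)))]
    rw [← hC i, Finset.sum_filter, Finset.sum_div]
    refine Finset.sum_congr rfl fun x hx => ?_
    by_cases h1 : 1 ≤ x.c i
    · rw [if_pos ⟨(hmemA x).mp hx, h1⟩, if_pos h1, hnu]
    · rw [if_neg (fun hc => h1 hc.2), if_neg h1, zero_div]
  have hED : ∀ i, Enu p μc μd μu μCS (m : ℤ) (fun x => (x.d i : ℝ))
      = (p i / μd i) * SB / SA := by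
    intro i
    rw [Enu, tsum_eq_sum (s := A)
      (fun x hx => if_neg (fun h => hx ((hmemA x).mpr (by exact_mod_cast h))))]
    rw [← hD i, Finset.sum_div]
    refine Finset.sum_congr rfl fun x hx => ?_
    rw [if_pos (by exact_mod_cast (hmemA x).mp hx), hnu, mul_div_assoc]
  have hEU : ∀ i, Enu p μc μd μu μCS (m : ℤ) (fun x => (x.u i : ℝ))
      = (p i / μu i) * SB / SA := by
    intro i
    rw [Enu, tsum_eq_sum (s := A)
      (fun x hx => if_neg (fun h => hx ((hmemA x).mpr (by exact_mod_cast h))))]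
    rw [← hU i, Finset.sum_div]
    refine Finset.sum_congr rfl fun x hx => ?_
    rw [if_pos (by exact_mod_cast (hmemA x).mp hx), hnu, mul_div_assoc]
  -- final algebra
  rw [hTCS, hWm, hWm1]
  simp only [hTC, hED, hEU]
  rw [mul_add, Finset.mul_sum]
  congr 1
  · ring
  · exact Finset.sum_congr rfl fun i _ => by ring
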